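/- arXiv:1812.04436 — 6 statements merged into one kernel-verified Lean document; each statement's English description precedes it below -/
import Mathlib

section
/- Let n ≥ 2, let x_1, …, x_n be strictly positive real numbers and let s ≥ 0. Then the iterated integral ∫_0^∞ x_1 e^{-x_1 u_1} ( ∫_{u_1 + s x_1}^∞ x_2 e^{-x_2 u_2} ( ⋯ ( ∫_{u_{n-1} + s x_{n-1}}^∞ x_n e^{-x_n u_n} du_n ) ⋯ ) du_2 ) du_1, in which for each i ≥ 2 the variable u_i ranges over (u_{i-1} + s·x_{i-1}, ∞), equals ∏_{i=1}^{n-1} ( x_i / (Σ_{j=i}^n x_j) ) · e^{- s · x_i · Σ_{j=i+1}^n x_j }. -/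
open MeasureTheory Real

/-- The nested iterated integral: `nestedInt s x i k a` integrates `k` successive
exponential densities with rates `x i, x (i+1), …, x (i+k-1)`, the innermost first;
the outermost variable ranges over `(a, ∞)` and each subsequent variable ranges over
`(previous variable + s * previous rate, ∞)`. -/
noncomputable def nestedInt (s : ℝ) (x : ℕ → ℝ) : ℕ → ℕ → ℝ → ℝ
  | _, 0, _ => 1
  | i, k + 1, a =>
      ∫ u in Set.Ioi a, x i * Real.exp (-(x i * u)) * nestedInt s x (i + 1) k (u + s * x i)

open Finset

/-!
Integrating from the inside out, each inner integral is an exponential in the previous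
variable: `nestedInt s x i k a = exp (-(x i + ⋯ + x (i+k-1)) a) · C`. Feeding this into the
next density `x e^{-x u}` leaves an integral of `exp (-(x + T) u)` over `(a, ∞)`, which
produces the factor `x / (x + T)`, while the shift `s x` of the inner lower limit produces
`exp (-s x T)`. The innermost integration contributes `x / x = 1`, which is why the product
stops at `n - 1`.
-/

noncomputable def stageWeight (s : ℝ) (x : ℕ → ℝ) (n m : ℕ) : ℝ :=
  (x m / ∑ j ∈ Ico m n, x j) * exp (-(s * x m * ∑ j ∈ Ico (m + 1) n, x j))

lemma stageWeight_succ_self (s : ℝ) {x : ℕ → ℝ} {m : ℕ} (hm : x m ≠ 0) :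
    stageWeight s x (m + 1) m = 1 := by
  simp [stageWeight, hm]

lemma integral_Ioi_exp_density_mul_exp_shift {c T : ℝ} (hcT : 0 < c + T) (d P a : ℝ) :
    ∫ u in Set.Ioi a, c * exp (-(c * u)) * (exp (-(T * (u + d))) * P) =
      exp (-((c + T) * a)) * (c / (c + T) * exp (-(T * d)) * P) := by
  have hintegrand : ∀ u, c * exp (-(c * u)) * (exp (-(T * (u + d))) * P) =
      c * exp (-(T * d)) * P * exp (-(c + T) * u) := by
    intro u
    calc c * exp (-(c * u)) * (exp (-(T * (u + d))) * P)
        = c * P * exp (-(c * u) + -(T * (u + d))) := by rw [exp_add]; ring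
      _ = c * P * exp (-(T * d) + -(c + T) * u) := by ring_nf
      _ = c * exp (-(T * d)) * P * exp (-(c + T) * u) := by rw [exp_add]; ring
  simp_rw [hintegrand]
  rw [integral_const_mul, integral_exp_mul_Ioi (by linarith)]
  field_simp

theorem nestedInt_eq_exp_mul_prod (s : ℝ) (x : ℕ → ℝ) (k i : ℕ)
    (hx : ∀ j ∈ Ico i (i + k), 0 < x j) (a : ℝ) :
    nestedInt s x i k a =
      exp (-((∑ j ∈ Ico i (i + k), x j) * a)) * ∏ m ∈ Ico i (i + k), stageWeight s x (i + k) m := by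
  induction k generalizing i a with
  | zero => simp [nestedInt]
  | succ k ih =>
    have hi : i < i + (k + 1) := by omega
    have hinner : ∀ b, nestedInt s x (i + 1) k b =
        exp (-((∑ j ∈ Ico (i + 1) (i + (k + 1)), x j) * b)) *
          ∏ m ∈ Ico (i + 1) (i + (k + 1)), stageWeight s x (i + (k + 1)) m := by
      rw [← add_assoc, add_right_comm]
      exact ih (i + 1) fun j hj => hx j (by simp only [mem_Ico] at hj ⊢; omega)
    have hxi : 0 < x i := hx i (by simp)
    have htail : 0 ≤ ∑ j ∈ Ico (i + 1) (i + (k + 1)), x j :=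
      sum_nonneg fun j hj => (hx j (by simp only [mem_Ico] at hj ⊢; omega)).le
    rw [nestedInt]
    simp_rw [hinner]
    rw [integral_Ioi_exp_density_mul_exp_shift (by linarith), ← sum_eq_sum_Ico_succ_bot hi,
      prod_eq_prod_Ico_succ_bot hi, stageWeight, sum_eq_sum_Ico_succ_bot hi]
    ring_nf

theorem nested_exponential_integral_general (n : ℕ) (x : ℕ → ℝ)
    (hx : ∀ i, i < n → 0 < x i) (s : ℝ) :
    nestedInt s x 0 n 0 =
      ∏ i ∈ Finset.range (n - 1),
        (x i / ∑ j ∈ Finset.Ico i n, x j) *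
          Real.exp (-(s * x i * ∑ j ∈ Finset.Ico (i + 1) n, x j)) := by
  cases n with
  | zero => simp [nestedInt]
  | succ m =>
    have h := nestedInt_eq_exp_mul_prod s x (m + 1) 0 (fun j hj => hx j (by simpa using hj)) 0
    rw [zero_add, mul_zero, neg_zero, exp_zero, one_mul, ← range_eq_Ico, prod_range_succ,
      stageWeight_succ_self s (hx m (by omega)).ne', mul_one] at h
    rw [Nat.add_sub_cancel]
    exact h

/-- for `n ≥ 2`, positive rates `x 0, …, x (n-1)` and `s ≥ 0`, the iterated
integral `∫_0^∞ x_1 e^{-x_1 u_1} ∫_{u_1+s x_1}^∞ x_2 e^{-x_2 u_2} ⋯ ∫_{u_{n-1}+s x_{n-1}}^∞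
x_n e^{-x_n u_n} du_n ⋯ du_1` equals
`∏_{i=1}^{n-1} (x_i / Σ_{j=i}^n x_j) · e^{-s x_i Σ_{j=i+1}^n x_j}` (here indexed from `0`). -/
theorem nested_exponential_integral (n : ℕ) (hn : 2 ≤ n) (x : ℕ → ℝ)
    (hx : ∀ i, i < n → 0 < x i) (s : ℝ) (hs : 0 ≤ s) :
    nestedInt s x 0 n 0 =
      ∏ i ∈ Finset.range (n - 1),
        (x i / ∑ j ∈ Finset.Ico i n, x j) *
          Real.exp (-(s * x i * ∑ j ∈ Finset.Ico (i + 1) n, x j)) :=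
  nested_exponential_integral_general n x hx s
end

section
/- For n ≥ 1 and any strictly positive real numbers x_1, …, x_n, the sum over all permutations τ of {1, …, n} of the products ∏_{i=1}^{n-1} x_{τ(i)} / ( Σ_{j=i}^{n} x_{τ(j)} ) equals 1. -/
/-!
`∏ i, x (τ i) / ∑ j ≥ i, x (τ j)` is the probability that size-biased sampling without
replacement draws the items in the order `τ`, so these weights sum to one. Concretely, splitting
off the first draw `p = τ 0` factors the weight as
`x p / ∑ x` times the weight of the remaining permutation on the other `n - 1` items, and
induction on `n` finishes. The last factor `x (τ (n-1)) / x (τ (n-1))` is `1`, which is why the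
product may stop at `n - 2`.
-/

open Finset Equiv

lemma Fin.Ici_eq_singleton_of_pred_le {n : ℕ} {i : Fin n} (hi : n - 1 ≤ i) : Ici i = {i} := by
  ext j
  simp only [mem_Ici, mem_singleton, Fin.le_def, Fin.ext_iff]
  omega

section SizeBiased

variable {K : Type*} [Field K]

def sizeBiasedWeight {n : ℕ} (x : Fin n → K) (τ : Perm (Fin n)) : K :=
  ∏ i, x (τ i) / ∑ j ∈ Ici i, x (τ j)

lemma sizeBiasedWeight_decomposeFin_symm {n : ℕ} (x : Fin (n + 1) → K) (p : Fin (n + 1))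
    (e : Perm (Fin n)) :
    sizeBiasedWeight x (Perm.decomposeFin.symm (p, e)) =
      x p / (∑ j, x j) * sizeBiasedWeight (fun k => x (swap 0 p k.succ)) e := by
  rw [sizeBiasedWeight, Fin.prod_univ_succ, show Ici (0 : Fin (n + 1)) = univ from Ici_bot,
    Equiv.sum_comp]
  simp [sizeBiasedWeight, Fin.sum_Ici_succ]

theorem sum_sizeBiasedWeight_eq_one [LinearOrder K] [IsStrictOrderedRing K] {n : ℕ}
    (x : Fin n → K) (hx : ∀ i, 0 < x i) :
    ∑ τ, sizeBiasedWeight x τ = 1 := by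
  induction n with
  | zero => simp [sizeBiasedWeight]
  | succ n ih =>
    have hsum : ∑ j, x j ≠ 0 := (sum_pos (fun j _ => hx j) univ_nonempty).ne'
    rw [← Equiv.sum_comp Perm.decomposeFin.symm, Fintype.sum_prod_type]
    simp_rw [sizeBiasedWeight_decomposeFin_symm, ← mul_sum, ih _ (fun k => hx _), mul_one,
      ← sum_div, div_self hsum]

lemma prod_filter_lt_pred_eq_sizeBiasedWeight {n : ℕ} (x : Fin n → K) (hx : ∀ i, x i ≠ 0)
    (τ : Perm (Fin n)) :
    ∏ i ∈ univ.filter (fun i : Fin n => (i : ℕ) < n - 1), x (τ i) / ∑ j ∈ Ici i, x (τ j) =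
      sizeBiasedWeight x τ := by
  refine prod_subset (filter_subset _ _) fun i _ hi => ?_
  rw [Fin.Ici_eq_singleton_of_pred_le (by simpa using hi), sum_singleton, div_self (hx _)]

end SizeBiased

theorem sum_sizeBiased_products_eq_one_general (n : ℕ) (x : Fin n → ℝ)
    (hx : ∀ i, 0 < x i) :
    ∑ τ : Equiv.Perm (Fin n),
      ∏ i ∈ Finset.univ.filter (fun i : Fin n => (i : ℕ) < n - 1),
        x (τ i) / ∑ j ∈ Finset.Ici i, x (τ j) = 1 := by
  simp_rw [prod_filter_lt_pred_eq_sizeBiasedWeight x (fun i => (hx i).ne')]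
  exact sum_sizeBiasedWeight_eq_one x hx

/-- for `n ≥ 1` and strictly positive reals `x_1, …, x_n`, the sum over all
permutations `τ` of `{1, …, n}` of `∏_{i=1}^{n-1} x_{τ(i)} / (Σ_{j=i}^n x_{τ(j)})` equals `1`
(the product over the empty range, for `n = 1`, being `1`). Indices are 0-based here, so
`i` ranges over `0, …, n-2` and the inner sum over `j ≥ i`. -/
theorem sum_sizeBiased_products_eq_one (n : ℕ) (hn : 1 ≤ n) (x : Fin n → ℝ)
    (hx : ∀ i, 0 < x i) :
    ∑ τ : Equiv.Perm (Fin n),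
      ∏ i ∈ Finset.univ.filter (fun i : Fin n => (i : ℕ) < n - 1),
        x (τ i) / ∑ j ∈ Finset.Ici i, x (τ j) = 1 :=
  sum_sizeBiased_products_eq_one_general n x hx
end

section
/- For n ≥ 2 and every s ≥ 0, the probability of the union over all permutations τ of {1, …, n} of the events E_τ(s) equals e^{- s · Σ_{1 ≤ i < j ≤ n} x_i x_j }. (The events E_τ(s), τ ranging over permutations, are pairwise disjoint when s > 0.) Consequently the first coalescence time S, defined by { S > s } = ⋃_τ E_τ(s), is exponentially distributed with rate Σ_{1 ≤ i < j ≤ n} x_i x_j. -/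
open MeasureTheory ProbabilityTheory Real

/-- The event `E_τ(s)`: for every consecutive pair of positions `j, j+1` (0-indexed),
`ξ_{τ(j+1)} > ξ_{τ(j)} + s · x_{τ(j)}`. -/
def gapEvent {Ω : Type*} (n : ℕ) (x : Fin n → ℝ) (ξ : Fin n → Ω → ℝ) (s : ℝ)
    (τ : Equiv.Perm (Fin n)) : Set Ω :=
  {ω | ∀ j : ℕ, ∀ hj : j + 1 < n,
    ξ (τ ⟨j + 1, hj⟩) ω > ξ (τ ⟨j, Nat.lt_of_succ_lt hj⟩) ω
      + s * x (τ ⟨j, Nat.lt_of_succ_lt hj⟩)}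

/-- `Σ_{1 ≤ i < j ≤ n} x_i x_j`. -/
def pairSum (n : ℕ) (x : Fin n → ℝ) : ℝ :=
  ∑ i : Fin n, ∑ j ∈ Finset.Ioi i, x i * x j

open Finset
open scoped ENNReal

/-!
With `c = gapShift x s τ`, i.e. `c_{τ(p)} = s (x_{τ(0)} + ⋯ + x_{τ(p-1)})`, the event `E_τ(s)`
says exactly that `ξ - c` increases along `τ`. On the positive orthant the law of `ξ - c` is
`e^{-Σ x_i c_i}` times the law of `ξ` (memorylessness of the exponential law, coordinatewise),
and `Σ x_i c_i = s Σ_{i<j} x_i x_j` for every `τ`. Hence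
`P(E_τ(s)) = e^{-s Σ_{i<j} x_i x_j} P(E_τ(0))`, and the events `E_τ(0)` cover the whole space up
to the null set where two of the `ξ_i` coincide.
-/

theorem two_mul_pairSum {n : ℕ} (x : Fin n → ℝ) :
    2 * pairSum n x = (∑ i, x i) ^ 2 - ∑ i, x i ^ 2 := by
  have h := sum_sum_Ioi_add_eq_sum_sum_off_diag fun j i => x j * x i
  have hcompl : ∀ i, ∑ j ∈ {i}ᶜ, x j * x i = (∑ j, x j) * x i - x i ^ 2 := fun i => by
    rw [← sum_compl_add_sum {i}, sum_singleton, add_mul, sum_mul]; ring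
  rw [sum_congr rfl fun i _ => hcompl i, sum_sub_distrib, ← mul_sum, ← sq] at h
  rw [← h, pairSum, mul_sum]
  exact sum_congr rfl fun i _ => by rw [mul_sum]; exact sum_congr rfl fun j _ => by ring

theorem pairSum_comp_perm {n : ℕ} (x : Fin n → ℝ) (τ : Equiv.Perm (Fin n)) :
    pairSum n (x ∘ τ) = pairSum n x := by
  have h := two_mul_pairSum (x ∘ τ)
  simp only [Function.comp_apply, Equiv.sum_comp τ (fun i => x i),
    Equiv.sum_comp τ (fun i => x i ^ 2), ← two_mul_pairSum x] at h
  linarith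

theorem MeasureTheory.Measure.pi_smul {ι : Type*} [Fintype ι] {α : ι → Type*}
    [∀ i, MeasurableSpace (α i)] (μ : ∀ i, Measure (α i)) [∀ i, IsFiniteMeasure (μ i)]
    (a : ι → ℝ≥0∞) (ha : ∀ i, a i ≠ ∞) :
    Measure.pi (fun i => a i • μ i) = (∏ i, a i) • Measure.pi μ := by
  have := fun i => (μ i).smul_finite (ha i)
  refine Measure.pi_eq fun s hs => ?_
  simp [Measure.pi_pi, prod_mul_distrib]

instance nullSingletonClass_expMeasure (r : ℝ) : NullSingletonClass (expMeasure r) := by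
  unfold expMeasure gammaMeasure; infer_instance

theorem expMeasure_Iio_zero (r : ℝ) : expMeasure r (Set.Iio 0) = 0 := by
  rw [expMeasure, gammaMeasure, withDensity_apply _ measurableSet_Iio]
  exact lintegral_exponentialPDF_of_nonpos le_rfl

theorem expMeasure_map_sub_restrict_Ici (r : ℝ) {c : ℝ} (hc : 0 ≤ c) :
    ((expMeasure r).map (· - c)).restrict (Set.Ici 0) =
      ENNReal.ofReal (exp (-(r * c))) • (expMeasure r).restrict (Set.Ici 0) := by
  ext B hB
  have hB' : MeasurableSet (B ∩ Set.Ici 0) := hB.inter measurableSet_Ici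
  have hshift : ∀ u ∈ B ∩ Set.Ici 0,
      exponentialPDF r (u + c) = ENNReal.ofReal (exp (-(r * c))) * exponentialPDF r u := by
    rintro u ⟨-, hu : 0 ≤ u⟩
    rw [exponentialPDF_of_nonneg (by linarith), exponentialPDF_of_nonneg hu,
      ← ENNReal.ofReal_mul (exp_pos _).le, mul_left_comm, ← exp_add]
    ring_nf
  have hpdf : Measurable (exponentialPDF r) := (measurable_exponentialPDFReal r).ennreal_ofReal
  rw [Measure.restrict_apply hB, Measure.map_apply (measurable_sub_const c) hB',
    Measure.smul_apply, Measure.restrict_apply hB, smul_eq_mul,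
    show expMeasure r = volume.withDensity (exponentialPDF r) from rfl,
    withDensity_apply _ hB', withDensity_apply _ (measurable_sub_const c hB')]
  calc ∫⁻ u in (· - c) ⁻¹' (B ∩ Set.Ici 0), exponentialPDF r u
      = ∫⁻ u in (· - c) ⁻¹' (B ∩ Set.Ici 0), exponentialPDF r ((u - c) + c) := by simp
    _ = ∫⁻ u in B ∩ Set.Ici 0, exponentialPDF r (u + c) :=
      (measurePreserving_sub_right volume c).setLIntegral_comp_preimage hB'
        (hpdf.comp (measurable_add_const c))
    _ = ∫⁻ u in B ∩ Set.Ici 0, ENNReal.ofReal (exp (-(r * c))) * exponentialPDF r u :=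
      setLIntegral_congr_fun hB' hshift
    _ = _ := lintegral_const_mul _ hpdf

section Exponential

variable {ι : Type*} [Fintype ι] {r c : ι → ℝ}

theorem pi_expMeasure_map_sub_restrict_nonneg (hr : ∀ i, 0 < r i) (hc : ∀ i, 0 ≤ c i) :
    (Measure.pi fun i => (expMeasure (r i)).map (· - c i)).restrict
        (Set.univ.pi fun _ => Set.Ici 0) =
      ENNReal.ofReal (exp (-∑ i, r i * c i)) •
        (Measure.pi fun i => expMeasure (r i)).restrict (Set.univ.pi fun _ => Set.Ici 0) := by
  have := fun i => isProbabilityMeasure_expMeasure (hr i)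
  have := fun i => Measure.isProbabilityMeasure_map (μ := expMeasure (r i))
    (measurable_sub_const (c i)).aemeasurable
  rw [Measure.restrict_pi_pi, Measure.restrict_pi_pi]
  simp_rw [expMeasure_map_sub_restrict_Ici _ (hc _)]
  rw [Measure.pi_smul _ _ fun _ => ENNReal.ofReal_ne_top,
    ← ENNReal.ofReal_prod_of_nonneg fun _ _ => (exp_pos _).le, ← exp_sum, ← sum_neg_distrib]

variable {Ω : Type*} [MeasurableSpace Ω] {P : Measure Ω} {ξ : ι → Ω → ℝ}

theorem measure_preimage_sub_eq (hmeas : ∀ i, Measurable (ξ i)) (hindep : iIndepFun ξ P)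
    (hr : ∀ i, 0 < r i) (hdist : ∀ i, P.map (ξ i) = expMeasure (r i)) (hc : ∀ i, 0 ≤ c i)
    {A : Set (ι → ℝ)} (hA : MeasurableSet A) (hA0 : A ⊆ Set.univ.pi fun _ => Set.Ici 0) :
    P ((fun ω i => ξ i ω - c i) ⁻¹' A) =
      ENNReal.ofReal (exp (-∑ i, r i * c i)) * P ((fun ω i => ξ i ω) ⁻¹' A) := by
  have hlaw : P.map (fun ω i => ξ i ω) = Measure.pi fun i => expMeasure (r i) := by
    rw [hindep.map_fun_eq_pi_map fun i => (hmeas i).aemeasurable]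
    simp_rw [hdist]
  have hlaw_sub : P.map (fun ω i => ξ i ω - c i) =
      Measure.pi fun i => (expMeasure (r i)).map (· - c i) := by
    rw [(hindep.comp (fun i u => u - c i) fun i => measurable_sub_const (c i)).map_fun_eq_pi_map
      fun i => ((hmeas i).sub_const _).aemeasurable]
    congr with i : 1
    rw [← hdist, Measure.map_map (measurable_sub_const _) (hmeas i)]
    rfl
  have hmeas_pi := measurable_pi_lambda _ hmeas
  have hmeas_sub := measurable_pi_lambda _ fun i => (hmeas i).sub_const (c i)
  rw [← Measure.map_apply hmeas_sub hA, ← Measure.map_apply hmeas_pi hA, hlaw, hlaw_sub,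
    ← Measure.restrict_eq_self _ hA0, pi_expMeasure_map_sub_restrict_nonneg hr hc,
    Measure.smul_apply, smul_eq_mul, Measure.restrict_eq_self _ hA0]

theorem ae_nonneg_of_map_eq_expMeasure (hmeas : ∀ i, Measurable (ξ i))
    (hdist : ∀ i, P.map (ξ i) = expMeasure (r i)) :
    ∀ᵐ ω ∂P, ∀ i, 0 ≤ ξ i ω := by
  refine ae_all_iff.2 fun i => ?_
  have h := expMeasure_Iio_zero (r i)
  rw [← hdist, Measure.map_apply (hmeas i) measurableSet_Iio] at h
  filter_upwards [measure_eq_zero_iff_ae_notMem.1 h] with ω hω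
  simpa using hω

end Exponential

theorem ProbabilityTheory.IndepFun.measure_setOf_eq_eq_zero {Ω β : Type*} [MeasurableSpace Ω]
    [MeasurableSpace β] [MeasurableEq β] {P : Measure Ω} [IsFiniteMeasure P] {X Y : Ω → β}
    (h : IndepFun X Y P) (hX : Measurable X) (hY : Measurable Y) [NullSingletonClass (P.map Y)] :
    P {ω | X ω = Y ω} = 0 := by
  have hdiag : MeasurableSet {p : β × β | p.1 = p.2} := measurableSet_diagonal
  rw [show {ω | X ω = Y ω} = (fun ω => (X ω, Y ω)) ⁻¹' {p | p.1 = p.2} from rfl,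
    ← Measure.map_apply (hX.prodMk hY) hdiag,
    h.map_prod_eq_prod_map_map hX.aemeasurable hY.aemeasurable, Measure.prod_apply hdiag]
  simp [Set.preimage, measure_singleton]

theorem ProbabilityTheory.iIndepFun.ae_injective {Ω ι β : Type*} [Countable ι]
    [MeasurableSpace Ω] [MeasurableSpace β] [MeasurableEq β] {P : Measure Ω} {ξ : ι → Ω → β}
    (hindep : iIndepFun ξ P) (hmeas : ∀ i, Measurable (ξ i))
    [∀ i, NullSingletonClass (P.map (ξ i))] :
    ∀ᵐ ω ∂P, Function.Injective fun i => ξ i ω := by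
  have := hindep.isProbabilityMeasure
  have hne : ∀ i j, ∀ᵐ ω ∂P, ξ i ω = ξ j ω → i = j := fun i j => by
    rcases eq_or_ne i j with hij | hij
    · exact .of_forall fun _ _ => hij
    · refine ae_iff.2 ?_
      simpa [hij] using (hindep.indepFun hij).measure_setOf_eq_eq_zero (hmeas i) (hmeas j)
  filter_upwards [ae_all_iff.2 fun i => ae_all_iff.2 (hne i)] with ω hω i j
  exact hω i j

theorem Fin.strictMono_iff_lt_of_succ_lt {α : Type*} [Preorder α] {n : ℕ} {f : Fin n → α} :
    StrictMono f ↔ ∀ j (hj : j + 1 < n), f ⟨j, Nat.lt_of_succ_lt hj⟩ < f ⟨j + 1, hj⟩ := by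
  cases n with
  | zero => exact iff_of_true (fun a => a.elim0) fun j hj => absurd hj (Nat.not_lt_zero _)
  | succ m =>
    rw [Fin.strictMono_iff_lt_succ]
    exact ⟨fun h j hj => h ⟨j, by omega⟩, fun h i => h i (by omega)⟩

theorem Tuple.eq_sort_of_strictMono_comp {α : Type*} [LinearOrder α] {n : ℕ} {f : Fin n → α}
    {σ : Equiv.Perm (Fin n)} (h : StrictMono (f ∘ σ)) : σ = Tuple.sort f :=
  Tuple.eq_sort_iff.2 ⟨h.monotone, fun _ _ hij hf => absurd hf (h hij).ne⟩

theorem Tuple.strictMono_comp_sort {α : Type*} [LinearOrder α] {n : ℕ} {f : Fin n → α}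
    (hf : Function.Injective f) : StrictMono (f ∘ Tuple.sort f) :=
  (Tuple.monotone_sort f).strictMono_of_injective (hf.comp (Tuple.sort f).injective)

theorem measurableSet_setOf_strictMono_comp {n : ℕ} (τ : Equiv.Perm (Fin n)) :
    MeasurableSet {u : Fin n → ℝ | StrictMono (u ∘ τ)} := by
  have h : {u : Fin n → ℝ | StrictMono (u ∘ τ)} =
      ⋂ i, ⋂ j, ⋂ (_ : i < j), {u | u (τ i) < u (τ j)} := by
    ext; simp [StrictMono]
  rw [h]
  exact .iInter fun i => .iInter fun j => .iInter fun _ =>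
    measurableSet_lt (measurable_pi_apply _) (measurable_pi_apply _)

section GapShift

variable {n : ℕ} (x : Fin n → ℝ) (s : ℝ) (τ : Equiv.Perm (Fin n))

def gapShift (i : Fin n) : ℝ :=
  s * ∑ k ∈ Iio (τ.symm i), x (τ k)

theorem gapShift_apply_perm (p : Fin n) :
    gapShift x s τ (τ p) = s * ∑ k ∈ Iio p, x (τ k) := by
  simp [gapShift]

theorem gapShift_zero_left : gapShift x 0 τ = 0 := by
  ext; simp [gapShift]

theorem gapShift_apply_perm_mk_zero (h : 0 < n) : gapShift x s τ (τ ⟨0, h⟩) = 0 := by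
  rw [gapShift_apply_perm, Iio_eq_empty.2 fun b _ => Nat.zero_le b.val, sum_empty,
    mul_zero]

theorem gapShift_succ (j : ℕ) (hj : j + 1 < n) :
    gapShift x s τ (τ ⟨j + 1, hj⟩) =
      gapShift x s τ (τ ⟨j, Nat.lt_of_succ_lt hj⟩) +
        s * x (τ ⟨j, Nat.lt_of_succ_lt hj⟩) := by
  have hIio : Iio (⟨j + 1, hj⟩ : Fin n) = insert ⟨j, Nat.lt_of_succ_lt hj⟩
      (Iio (⟨j, Nat.lt_of_succ_lt hj⟩ : Fin n)) := by
    ext k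
    simp only [mem_Iio, mem_insert, Fin.lt_def, Fin.ext_iff]
    omega
  rw [gapShift_apply_perm, gapShift_apply_perm, hIio, sum_insert (by simp)]
  ring

variable {x s}

theorem gapShift_nonneg (hx : ∀ i, 0 ≤ x i) (hs : 0 ≤ s) (i : Fin n) :
    0 ≤ gapShift x s τ i :=
  mul_nonneg hs (sum_nonneg fun _ _ => hx _)

variable (x s)

theorem sum_mul_gapShift : ∑ i, x i * gapShift x s τ i = s * pairSum n x := by
  calc ∑ i, x i * gapShift x s τ i
      = s * ∑ p, ∑ k ∈ Iio p, x (τ k) * x (τ p) := by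
        rw [← Equiv.sum_comp τ, mul_sum]
        refine sum_congr rfl fun p _ => ?_
        rw [gapShift_apply_perm, ← sum_mul]
        ring
    _ = s * ∑ k, ∑ p ∈ Ioi k, x (τ k) * x (τ p) := by
        rw [sum_comm' (t' := univ) (s' := Ioi) fun p k => by simp]
    _ = s * pairSum n x := by rw [← pairSum_comp_perm x τ, pairSum]; rfl

end GapShift

section GapEvent

variable {Ω : Type*} {n : ℕ} {x : Fin n → ℝ} (ξ : Fin n → Ω → ℝ) {s : ℝ}

theorem mem_gapEvent_iff {τ : Equiv.Perm (Fin n)} {ω : Ω} :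
    ω ∈ gapEvent n x ξ s τ ↔ StrictMono fun p => ξ (τ p) ω - gapShift x s τ (τ p) := by
  rw [Fin.strictMono_iff_lt_of_succ_lt]
  refine forall₂_congr fun j hj => ?_
  rw [gapShift_succ]
  constructor <;> intro h <;> linarith

theorem gapEvent_zero (τ : Equiv.Perm (Fin n)) :
    gapEvent n x ξ 0 τ = (fun ω i => ξ i ω) ⁻¹' {u | StrictMono (u ∘ τ)} := by
  ext ω
  simp [mem_gapEvent_iff, gapShift_zero_left, Function.comp_def]

theorem gapEvent_subset_gapEvent_zero (hx : ∀ i, 0 ≤ x i) (hs : 0 ≤ s)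
    (τ : Equiv.Perm (Fin n)) :
    gapEvent n x ξ s τ ⊆ gapEvent n x ξ 0 τ := fun ω h j hj => by
  have := mul_nonneg hs (hx (τ ⟨j, Nat.lt_of_succ_lt hj⟩))
  have := h j hj
  show _ > _ + 0 * _
  linarith

theorem pairwise_disjoint_gapEvent (hx : ∀ i, 0 ≤ x i) (hs : 0 ≤ s) :
    Pairwise (Function.onFun Disjoint (gapEvent n x ξ s)) := fun τ σ hτσ => by
  refine Disjoint.mono (gapEvent_subset_gapEvent_zero ξ hx hs τ)
    (gapEvent_subset_gapEvent_zero ξ hx hs σ) ?_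
  rw [gapEvent_zero, gapEvent_zero]
  refine Disjoint.preimage _ (Set.disjoint_left.2 fun u hτ hσ => hτσ ?_)
  exact (Tuple.eq_sort_of_strictMono_comp hτ).trans (Tuple.eq_sort_of_strictMono_comp hσ).symm

theorem gapEvent_inter_nonneg (hx : ∀ i, 0 ≤ x i) (hs : 0 ≤ s) (τ : Equiv.Perm (Fin n)) :
    gapEvent n x ξ s τ ∩ {ω | ∀ i, 0 ≤ ξ i ω} =
      (fun ω i => ξ i ω - gapShift x s τ i) ⁻¹'
        ({u | StrictMono (u ∘ τ)} ∩ Set.univ.pi fun _ => Set.Ici 0) := by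
  ext ω
  simp only [Set.mem_inter_iff, Set.mem_preimage, Set.mem_ofPred_eq, Set.mem_univ_pi,
    Set.mem_Ici, mem_gapEvent_iff, Function.comp_def]
  refine and_congr_right fun hmono => ⟨fun hξ i => ?_, fun h i => ?_⟩
  · obtain ⟨p, rfl⟩ := τ.surjective i
    have h0 := gapShift_apply_perm_mk_zero x s τ p.pos
    calc 0 ≤ ξ (τ ⟨0, p.pos⟩) ω - gapShift x s τ (τ ⟨0, p.pos⟩) := by
          linarith [hξ (τ ⟨0, p.pos⟩)]
      _ ≤ ξ (τ p) ω - gapShift x s τ (τ p) := hmono.monotone (Nat.zero_le p.val)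
  · linarith [h i, gapShift_nonneg τ hx hs i]

theorem measurableSet_gapEvent [MeasurableSpace Ω] (hmeas : ∀ i, Measurable (ξ i))
    (τ : Equiv.Perm (Fin n)) : MeasurableSet (gapEvent n x ξ s τ) := by
  simp only [gapEvent, gt_iff_lt, Set.ofPred_forall]
  exact .iInter fun j => .iInter fun hj =>
    measurableSet_lt ((hmeas _).add_const _) (hmeas _)

end GapEvent

section Probability

variable {Ω : Type*} [MeasurableSpace Ω] {P : Measure Ω} {n : ℕ} {x : Fin n → ℝ}
  {ξ : Fin n → Ω → ℝ}

theorem measure_gapEvent (hx : ∀ i, 0 < x i) (hmeas : ∀ i, Measurable (ξ i))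
    (hindep : iIndepFun ξ P) (hdist : ∀ i, P.map (ξ i) = expMeasure (x i)) {s : ℝ}
    (hs : 0 ≤ s) (τ : Equiv.Perm (Fin n)) :
    P (gapEvent n x ξ s τ) =
      ENNReal.ofReal (exp (-(s * pairSum n x))) * P (gapEvent n x ξ 0 τ) := by
  have hx' : ∀ i, 0 ≤ x i := fun i => (hx i).le
  have hnonneg : P {ω | ∀ i, 0 ≤ ξ i ω}ᶜ = 0 := ae_nonneg_of_map_eq_expMeasure hmeas hdist
  have hS := (measurableSet_setOf_strictMono_comp τ).inter
    (MeasurableSet.univ_pi fun _ : Fin n => measurableSet_Ici (a := (0 : ℝ)))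
  calc P (gapEvent n x ξ s τ)
      = P (gapEvent n x ξ s τ ∩ {ω | ∀ i, 0 ≤ ξ i ω}) :=
        (measure_inter_conull hnonneg).symm
    _ = ENNReal.ofReal (exp (-∑ i, x i * gapShift x s τ i)) *
          P (gapEvent n x ξ 0 τ ∩ {ω | ∀ i, 0 ≤ ξ i ω}) := by
      rw [gapEvent_inter_nonneg ξ hx' hs, gapEvent_inter_nonneg ξ hx' le_rfl,
        measure_preimage_sub_eq hmeas hindep hx hdist (gapShift_nonneg τ hx' hs) hS
          Set.inter_subset_right]
      simp [gapShift_zero_left]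
    _ = _ := by rw [sum_mul_gapShift, measure_inter_conull hnonneg]

theorem measure_iUnion_gapEvent_zero (hmeas : ∀ i, Measurable (ξ i)) (hindep : iIndepFun ξ P)
    [∀ i, NullSingletonClass (P.map (ξ i))] :
    P (⋃ τ, gapEvent n x ξ 0 τ) = 1 := by
  have := hindep.isProbabilityMeasure
  rw [← prob_compl_eq_zero_iff (.iUnion (measurableSet_gapEvent ξ hmeas)), ← mem_ae_iff]
  filter_upwards [hindep.ae_injective hmeas] with ω hω
  rw [Set.mem_iUnion]
  exact ⟨Tuple.sort _, by simpa [gapEvent_zero] using Tuple.strictMono_comp_sort hω⟩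

end Probability

theorem prob_union_gapEvents_general (n : ℕ) (x : Fin n → ℝ) (hx : ∀ i, 0 < x i)
    {Ω : Type*} [MeasurableSpace Ω] (P : Measure Ω)
    (ξ : Fin n → Ω → ℝ) (hmeas : ∀ i, Measurable (ξ i))
    (hindep : iIndepFun ξ P)
    (hdist : ∀ i, P.map (ξ i) = expMeasure (x i))
    (s : ℝ) (hs : 0 ≤ s) :
    P (⋃ τ : Equiv.Perm (Fin n), gapEvent n x ξ s τ) =
        ENNReal.ofReal (Real.exp (-(s * pairSum n x))) ∧
      (0 < s → Pairwise (Function.onFun Disjoint (gapEvent n x ξ s))) := by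
  have hx' : ∀ i, 0 ≤ x i := fun i => (hx i).le
  have : ∀ i, NullSingletonClass (P.map (ξ i)) := fun i => hdist i ▸ inferInstance
  refine ⟨?_, fun _ => pairwise_disjoint_gapEvent ξ hx' hs⟩
  rw [measure_iUnion (pairwise_disjoint_gapEvent ξ hx' hs) (measurableSet_gapEvent ξ hmeas),
    tsum_congr (measure_gapEvent hx hmeas hindep hdist hs), ENNReal.tsum_mul_left,
    ← measure_iUnion (pairwise_disjoint_gapEvent ξ hx' le_rfl) (measurableSet_gapEvent ξ hmeas),
    measure_iUnion_gapEvent_zero hmeas hindep, mul_one]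

/-- for `n ≥ 2` and every `s ≥ 0`,
`P(⋃_τ E_τ(s)) = e^{-s Σ_{1≤i<j≤n} x_i x_j}`, and the events `E_τ(s)` are pairwise
disjoint when `s > 0`. Hence the first coalescence time `S` (whose tail events are
`{S > s} = ⋃_τ E_τ(s)`) is exponential with rate `Σ_{1≤i<j≤n} x_i x_j`. -/
theorem prob_union_gapEvents (n : ℕ) (hn : 2 ≤ n) (x : Fin n → ℝ) (hx : ∀ i, 0 < x i)
    {Ω : Type*} [MeasurableSpace Ω] (P : Measure Ω) [IsProbabilityMeasure P]
    (ξ : Fin n → Ω → ℝ) (hmeas : ∀ i, Measurable (ξ i))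
    (hindep : iIndepFun ξ P)
    (hdist : ∀ i, P.map (ξ i) = expMeasure (x i))
    (s : ℝ) (hs : 0 ≤ s) :
    P (⋃ τ : Equiv.Perm (Fin n), gapEvent n x ξ s τ) =
        ENNReal.ofReal (Real.exp (-(s * pairSum n x))) ∧
      (0 < s → Pairwise (Function.onFun Disjoint (gapEvent n x ξ s))) :=
  prob_union_gapEvents_general n x hx P ξ hmeas hindep hdist s hs
end

section
/- Let (c_j)_{j ≥ 1} be strictly positive reals with Σ_{j ≥ 1} c_j³ < ∞, and let (ξ_j)_{j ≥ 1} be independent random variables with ξ_j exponentially distributed with rate c_j. Then for every fixed s ≥ 0, the partial sums Σ_{j=1}^{N} ( c_j · 1{ ξ_j ≤ s } − c_j² · s ) converge almost surely (to a finite limit) as N → ∞. Hence the process V^c(s) = Σ_j ( c_j 1{ ξ_j ≤ s } − c_j² s ) is well defined for every s ≥ 0. -/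
/-! The centred indicators `c_j 1{ξ_j ≤ s} - c_j (1 - e^{-c_j s})` are independent, with
variances at most `s c_j³`; their partial sums form a martingale bounded in `L²`, hence in `L¹`,
so they converge almost surely (Kolmogorov's one-series theorem). What remains is the
deterministic drift `c_j (1 - e^{-c_j s}) - c_j² s`, which is `O(s² c_j³)` because
`|1 - e^{-x} - x| ≤ x²`, hence summable. -/

open MeasureTheory ProbabilityTheory Filter Topology

lemma Real.abs_one_sub_exp_neg_sub_le {x : ℝ} (hx : 0 ≤ x) :
    |1 - Real.exp (-x) - x| ≤ x ^ 2 := by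
  have h_inv : Real.exp (-x) ≤ (1 + x)⁻¹ := by
    rw [Real.exp_neg]
    exact inv_anti₀ (by linarith) (by linarith [Real.add_one_le_exp x])
  have h_geom : (1 + x)⁻¹ ≤ 1 - x + x ^ 2 := by
    rw [inv_le_iff_one_le_mul₀' (by linarith)]
    nlinarith [pow_two_nonneg x, mul_nonneg hx (pow_two_nonneg x)]
  rw [abs_le]
  constructor <;> nlinarith [Real.one_sub_le_exp_neg x]

lemma abs_mul_one_sub_exp_neg_mul_sub_le {r s : ℝ} (hr : 0 ≤ r) (hs : 0 ≤ s) :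
    |r * (1 - Real.exp (-(r * s))) - r ^ 2 * s| ≤ s ^ 2 * r ^ 3 :=
  calc |r * (1 - Real.exp (-(r * s))) - r ^ 2 * s|
      = r * |1 - Real.exp (-(r * s)) - r * s| := by
        rw [← abs_of_nonneg hr, ← abs_mul, abs_of_nonneg hr]; ring_nf
    _ ≤ r * (r * s) ^ 2 :=
        mul_le_mul_of_nonneg_left (Real.abs_one_sub_exp_neg_sub_le (mul_nonneg hr hs)) hr
    _ = s ^ 2 * r ^ 3 := by ring

namespace ProbabilityTheory

variable {Ω : Type*} [MeasurableSpace Ω] {P : Measure Ω}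

section OneSeries

variable {X : ℕ → Ω → ℝ}

/-- The sum runs up to `n` inclusive so that it is measurable for the natural filtration at
time `n`. -/
lemma iIndepFun.martingale_sum_range_succ_sub_integral (hXm : ∀ j, StronglyMeasurable (X j))
    (hX : iIndepFun X P) (hint : ∀ j, Integrable (X j) P) :
    Martingale (fun n ω => ∑ j ∈ Finset.range (n + 1), (X j ω - P[X j]))
      (Filtration.natural X hXm) P := by
  have := hX.isProbabilityMeasure
  set 𝒢 := Filtration.natural X hXm
  have hadp : StronglyAdapted 𝒢 fun n ω => ∑ j ∈ Finset.range (n + 1), (X j ω - P[X j]) :=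
    fun n => Finset.stronglyMeasurable_fun_sum _ fun j hj =>
      (((Filtration.stronglyAdapted_natural hXm) j).mono
        (𝒢.mono (Nat.lt_succ_iff.mp (Finset.mem_range.mp hj)))).sub stronglyMeasurable_const
  have hM_int : ∀ n, Integrable (fun ω => ∑ j ∈ Finset.range n, (X j ω - P[X j])) P :=
    fun n => integrable_finsetSum _ fun j _ => (hint j).sub (integrable_const _)
  refine martingale_nat hadp (fun n => hM_int _) fun n => ?_
  have hind : P[X (n + 1)|𝒢 n] =ᵐ[P] fun _ => P[X (n + 1)] :=
    hX.condExp_natural_ae_eq_of_lt hXm (Nat.lt_succ_self n)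
  have hsplit : (fun ω => ∑ j ∈ Finset.range (n + 2), (X j ω - P[X j])) =
      (fun ω => ∑ j ∈ Finset.range (n + 1), (X j ω - P[X j])) +
        (X (n + 1) - fun _ => P[X (n + 1)]) := by
    ext ω; simp [Finset.sum_range_succ _ (n + 1)]
  rw [hsplit]
  filter_upwards [condExp_add (hM_int (n + 1)) ((hint (n + 1)).sub (integrable_const _)) (𝒢 n),
    condExp_sub (hint (n + 1)) (integrable_const (P[X (n + 1)])) (𝒢 n), hind]
    with ω h₁ h₂ h₃
  rw [h₁, Pi.add_apply, h₂, Pi.sub_apply, h₃, condExp_const (𝒢.le n),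
    condExp_of_stronglyMeasurable (𝒢.le n) (hadp n) (hM_int _)]
  simp

lemma eLpNorm_sub_integral_one_le_sqrt_variance [IsProbabilityMeasure P] {Y : Ω → ℝ}
    (hY : MemLp Y 2 P) :
    eLpNorm (fun ω => Y ω - P[Y]) 1 P ≤ ENNReal.ofReal √(Var[Y; P]) := by
  have hcentred : MemLp (fun ω => Y ω - P[Y]) 2 P := hY.sub (memLp_const _)
  calc eLpNorm (fun ω => Y ω - P[Y]) 1 P
      ≤ eLpNorm (fun ω => Y ω - P[Y]) 2 P :=
        eLpNorm_le_eLpNorm_of_exponent_le (by norm_num) hcentred.aestronglyMeasurable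
    _ = evariance Y P ^ (1 / 2 : ℝ) := by
        rw [eLpNorm_eq_lintegral_rpow_enorm_toReal two_ne_zero ENNReal.ofNat_ne_top, evariance]
        simp_rw [ENNReal.toReal_ofNat, ENNReal.rpow_two]
    _ = ENNReal.ofReal √(Var[Y; P]) := by
        rw [← hY.ofReal_variance_eq, Real.sqrt_eq_rpow,
          ENNReal.ofReal_rpow_of_nonneg (variance_nonneg _ _) (by norm_num)]

/-- Kolmogorov's one-series theorem. -/
theorem iIndepFun.exists_ae_tendsto_sum_sub_integral (hXm : ∀ j, Measurable (X j))
    (hX : iIndepFun X P) (hL2 : ∀ j, MemLp (X j) 2 P) (hvar : Summable fun j => Var[X j; P]) :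
    ∀ᵐ ω ∂P, ∃ L : ℝ,
      Tendsto (fun n => ∑ j ∈ Finset.range n, (X j ω - P[X j])) atTop (𝓝 L) := by
  have := hX.isProbabilityMeasure
  set S : ℕ → Ω → ℝ := fun n => ∑ j ∈ Finset.range (n + 1), X j
  have hS : ∀ n, MemLp (S n) 2 P := fun n => memLp_finsetSum' _ fun j _ => hL2 j
  have hS_centred : ∀ n, (fun ω => S n ω - P[S n]) =
      fun ω => ∑ j ∈ Finset.range (n + 1), (X j ω - P[X j]) := by
    intro n
    ext ω
    simp only [S, Finset.sum_apply, Finset.sum_sub_distrib,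
      integral_finsetSum _ fun j _ => (hL2 j).integrable one_le_two]
  have hS_var : ∀ n, Var[S n; P] ≤ ∑' j, Var[X j; P] := fun n => by
    rw [IndepFun.variance_sum (fun j _ => hL2 j) fun i _ j _ hij => hX.indepFun hij]
    exact hvar.sum_le_tsum _ fun j _ => variance_nonneg _ _
  have hbdd : ∀ n, eLpNorm (fun ω => ∑ j ∈ Finset.range (n + 1), (X j ω - P[X j])) 1 P ≤
      ENNReal.ofReal √(∑' j, Var[X j; P]) := fun n => by
    rw [← hS_centred]
    exact (eLpNorm_sub_integral_one_le_sqrt_variance (hS n)).trans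
      (ENNReal.ofReal_le_ofReal (Real.sqrt_le_sqrt (hS_var n)))
  filter_upwards [((hX.martingale_sum_range_succ_sub_integral
      (fun j => (hXm j).stronglyMeasurable) fun j => (hL2 j).integrable one_le_two).submartingale
      ).exists_ae_tendsto_of_bdd (R := (ENNReal.ofReal √(∑' j, Var[X j; P])).toNNReal)
      (by simpa using hbdd)] with ω ⟨L, hL⟩
  exact ⟨L, (tendsto_add_atTop_iff_nat 1).mp hL⟩

end OneSeries

lemma variance_indicator_const_le [IsProbabilityMeasure P] {A : Set Ω} (hA : MeasurableSet A)
    (a : ℝ) : Var[A.indicator (fun _ => a); P] ≤ a ^ 2 * P.real A := by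
  have hsq : A.indicator (fun _ => a) ^ 2 = A.indicator fun _ => a ^ 2 := by
    ext ω; by_cases hω : ω ∈ A <;> simp [hω]
  calc Var[A.indicator (fun _ => a); P]
      ≤ P[A.indicator (fun _ => a) ^ 2] :=
        variance_le_expectation_sq (stronglyMeasurable_const.indicator hA).aestronglyMeasurable
    _ = a ^ 2 * P.real A := by rw [hsq, integral_indicator_const _ hA, smul_eq_mul, mul_comm]

section Exponential

variable {ξ : Ω → ℝ} {r s : ℝ}

lemma measureReal_preimage_Iic_of_map_eq_expMeasure (hr : 0 < r) (hs : 0 ≤ s)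
    (hξ : Measurable ξ) (h : P.map ξ = expMeasure r) :
    P.real (ξ ⁻¹' Set.Iic s) = 1 - Real.exp (-(r * s)) := by
  have := isProbabilityMeasure_expMeasure hr
  rw [← map_measureReal_apply hξ measurableSet_Iic, h, ← cdf_eq_real, cdf_expMeasure_eq hr,
    if_pos hs]

lemma integral_indicator_preimage_Iic_of_map_eq_expMeasure (hr : 0 < r) (hs : 0 ≤ s)
    (hξ : Measurable ξ) (h : P.map ξ = expMeasure r) :
    P[(ξ ⁻¹' Set.Iic s).indicator (fun _ => r)] = r * (1 - Real.exp (-(r * s))) := by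
  rw [integral_indicator_const _ (hξ measurableSet_Iic),
    measureReal_preimage_Iic_of_map_eq_expMeasure hr hs hξ h, smul_eq_mul, mul_comm]

lemma variance_indicator_preimage_Iic_le_of_map_eq_expMeasure (hr : 0 < r) (hs : 0 ≤ s)
    (hξ : Measurable ξ) (h : P.map ξ = expMeasure r) :
    Var[(ξ ⁻¹' Set.Iic s).indicator (fun _ => r); P] ≤ s * r ^ 3 := by
  have : IsProbabilityMeasure P := by
    rw [← Measure.isProbabilityMeasure_map_iff hξ.aemeasurable, h]
    exact isProbabilityMeasure_expMeasure hr
  calc Var[(ξ ⁻¹' Set.Iic s).indicator (fun _ => r); P]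
      ≤ r ^ 2 * P.real (ξ ⁻¹' Set.Iic s) :=
        variance_indicator_const_le (hξ measurableSet_Iic) r
    _ ≤ r ^ 2 * (r * s) := by
        rw [measureReal_preimage_Iic_of_map_eq_expMeasure hr hs hξ h]
        exact mul_le_mul_of_nonneg_left (by linarith [Real.one_sub_le_exp_neg (r * s)])
          (sq_nonneg r)
    _ = s * r ^ 3 := by ring

end Exponential

end ProbabilityTheory

/-- if `c_j > 0` with `Σ_j c_j³ < ∞` and the `ξ_j` are independent
exponentials with rates `c_j`, then for every fixed `s ≥ 0` the partial sums
`Σ_{j<N} (c_j · 1{ξ_j ≤ s} − c_j² s)` converge almost surely to a finite limit as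
`N → ∞`; hence `V^c(s)` is well defined. -/
theorem Vc_partial_sums_converge_ae {Ω : Type*} [MeasurableSpace Ω]
    (P : Measure Ω) [IsProbabilityMeasure P] (c : ℕ → ℝ) (hc : ∀ j, 0 < c j)
    (hsum : Summable (fun j => c j ^ 3))
    (ξ : ℕ → Ω → ℝ) (hmeas : ∀ j, Measurable (ξ j))
    (hindep : iIndepFun ξ P)
    (hdist : ∀ j, P.map (ξ j) = expMeasure (c j))
    (s : ℝ) (hs : 0 ≤ s) :
    ∀ᵐ ω ∂P, ∃ L : ℝ,
      Tendsto
        (fun N => ∑ j ∈ Finset.range N,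
          (c j * (if ξ j ω ≤ s then 1 else 0) - c j ^ 2 * s))
        atTop (𝓝 L) := by
  set X : ℕ → Ω → ℝ := fun j => (ξ j ⁻¹' Set.Iic s).indicator fun _ => c j
  have hX_indep : iIndepFun X P :=
    hindep.comp (fun j => (Set.Iic s).indicator fun _ => c j)
      fun j => measurable_const.indicator measurableSet_Iic
  have hX_meas : ∀ j, Measurable (X j) := fun j =>
    measurable_const.indicator (hmeas j measurableSet_Iic)
  have hX_L2 : ∀ j, MemLp (X j) 2 P := fun j =>
    memLp_indicator_const 2 (hmeas j measurableSet_Iic) _ (Or.inr (measure_ne_top _ _))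
  have hX_var : Summable fun j => Var[X j; P] :=
    (hsum.mul_left s).of_nonneg_of_le (fun j => variance_nonneg _ _) fun j =>
      variance_indicator_preimage_Iic_le_of_map_eq_expMeasure (hc j) hs (hmeas j) (hdist j)
  have hdrift : Summable fun j => c j * (1 - Real.exp (-(c j * s))) - c j ^ 2 * s :=
    (hsum.mul_left (s ^ 2)).of_norm_bounded fun j =>
      abs_mul_one_sub_exp_neg_mul_sub_le (hc j).le hs
  filter_upwards [hX_indep.exists_ae_tendsto_sum_sub_integral hX_meas hX_L2 hX_var]
    with ω ⟨L, hL⟩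
  refine ⟨L + ∑' j, (c j * (1 - Real.exp (-(c j * s))) - c j ^ 2 * s), ?_⟩
  convert hL.add hdrift.hasSum.tendsto_sum_nat using 2 with N
  rw [← Finset.sum_add_distrib]
  refine Finset.sum_congr rfl fun j _ => ?_
  rw [integral_indicator_preimage_Iic_of_map_eq_expMeasure (hc j) hs (hmeas j) (hdist j)]
  by_cases hj : ξ j ω ≤ s
  · simp [X, hj]
  · simp [X, hj]
    ring
end

section
/- Let (c_j)_{j ≥ 1} be a nonincreasing sequence of strictly positive reals with Σ_{j ≥ 1} c_j³ = ∞, and let (ξ_j)_{j ≥ 1} be independent random variables with ξ_j exponentially distributed with rate c_j. Then for every fixed s > 0, the probability that the partial sums Σ_{j=1}^{N} ( c_j · 1{ ξ_j ≤ s } − c_j² · s ) converge to a finite limit as N → ∞ is zero. Together with the preceding statement, Σ_j c_j³ < ∞ is precisely the condition for the process V^c to be well defined. -/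
/-!
Centre each summand: `c_j 1{ξ_j ≤ s} - c_j² s = Y_j - d_j`, where
`p_j = P(ξ_j ≤ s) = 1 - e^{-c_j s}`, `Y_j = c_j (1{ξ_j ≤ s} - p_j)` and `d_j = c_j (c_j s - p_j) ≥ 0` is deterministic.
The partial sums of the independent centred `Y_j` form a martingale with increments bounded
by `c_0`, so almost surely they do not tend to `+∞`. But `Σ d_j = ∞`: summability of `d` would
force `c_j → 0`, and then `d_j ≥ s² c_j³ / 4` eventually. Hence a finite limit of
`Σ (Y_j - d_j)` would make `Σ Y_j` tend to `+∞`.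
-/

open MeasureTheory ProbabilityTheory Filter Topology

namespace Real

lemma sq_div_four_le_sub_one_sub_exp_neg {x : ℝ} (h0 : 0 ≤ x) (h1 : x ≤ 1) :
    x ^ 2 / 4 ≤ x - (1 - exp (-x)) := by
  have hbound := exp_bound (x := -x) (by rwa [abs_neg, abs_of_nonneg h0]) (n := 3) (by norm_num)
  have htaylor : ∑ m ∈ Finset.range 3, (-x) ^ m / (m.factorial : ℝ) = 1 - x + x ^ 2 / 2 := by
    simp [Finset.sum_range_succ, Nat.factorial]; ring
  rw [htaylor, abs_neg, abs_of_nonneg h0] at hbound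
  have hlower := (abs_sub_le_iff.1 hbound).2
  norm_num [Nat.factorial] at hlower
  nlinarith [pow_le_pow_of_le_one h0 h1 (show 2 ≤ 3 by norm_num)]

end Real

open Real in
lemma Antitone.not_summable_mul_sub_one_sub_exp_neg {c : ℕ → ℝ} (hmono : Antitone c)
    (hc : ∀ j, 0 ≤ c j) (hsum : ¬ Summable (fun j => c j ^ 3)) {s : ℝ} (hs : 0 < s) :
    ¬ Summable (fun j => c j * (c j * s - (1 - exp (-(c j * s))))) := by
  intro hdrift
  set φ : ℝ → ℝ := fun x => x * (x * s - (1 - exp (-(x * s))))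
  have hbdd : BddBelow (Set.range c) := ⟨0, Set.forall_mem_range.2 hc⟩
  set ε := ⨅ j, c j
  have hlim : Tendsto c atTop (𝓝 ε) := tendsto_atTop_ciInf hmono hbdd
  have hφ : Continuous φ := by fun_prop
  -- the drift tends both to `0` and to `φ ε`, and `φ` vanishes on `[0, ∞)` only at `0`
  have hε : ε = 0 := by
    have hφε : φ ε = 0 :=
      tendsto_nhds_unique ((hφ.tendsto ε).comp hlim) hdrift.tendsto_atTop_zero
    have hε0 : 0 ≤ ε := le_ciInf hc
    by_contra hne
    have hεpos : 0 < ε := hε0.lt_of_ne' hne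
    have := one_sub_lt_exp_neg (mul_pos hεpos hs).ne'
    exact hφε.not_gt (mul_pos hεpos (by linarith))
  rw [hε] at hlim
  obtain ⟨N, hN⟩ :=
    eventually_atTop.1 ((hlim.mul_const s).eventually_le_const (show 0 * s < 1 by simp))
  refine hsum ((summable_nat_add_iff N).1 ?_)
  refine .of_nonneg_of_le (fun j => pow_nonneg (hc _) 3) (fun j => ?_)
    (((summable_nat_add_iff N).2 hdrift).mul_left (4 / s ^ 2))
  have := sq_div_four_le_sub_one_sub_exp_neg (mul_nonneg (hc (j + N)) hs.le)
    (hN (j + N) (Nat.le_add_left N j))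
  calc c (j + N) ^ 3 = 4 / s ^ 2 * (c (j + N) * ((c (j + N) * s) ^ 2 / 4)) := by field_simp
    _ ≤ _ := by gcongr; exact hc _

namespace ProbabilityTheory.iIndepFun

variable {Ω : Type*} [MeasurableSpace Ω] {P : Measure Ω} {Y : ℕ → Ω → ℝ}

theorem martingale_sum_range_succ (hY : ∀ j, StronglyMeasurable (Y j)) (hindep : iIndepFun Y P)
    (hint : ∀ j, Integrable (Y j) P) (hmean : ∀ j, P[Y j] = 0) :
    Martingale (fun n => ∑ j ∈ Finset.range (n + 1), Y j) (Filtration.natural Y hY) P := by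
  have := hindep.isProbabilityMeasure
  set ℱ := Filtration.natural Y hY with hℱ
  have hadapted : StronglyAdapted ℱ (fun n => ∑ j ∈ Finset.range (n + 1), Y j) := fun n =>
    Finset.stronglyMeasurable_sum _ fun j hj =>
      (Filtration.stronglyAdapted_natural hY j).mono (ℱ.mono (Finset.mem_range_succ_iff.1 hj))
  have hsum_int : ∀ n, Integrable (∑ j ∈ Finset.range (n + 1), Y j) P := fun n =>
    integrable_finsetSum' _ fun j _ => hint j
  refine martingale_nat hadapted hsum_int fun n => ?_
  have hnext : P[Y (n + 1) | ℱ n] =ᵐ[P] fun _ => 0 := by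
    simpa [hmean, ← hℱ] using hindep.condExp_natural_ae_eq_of_lt hY (Nat.lt_succ_self n)
  have hcurrent : P[∑ j ∈ Finset.range (n + 1), Y j | ℱ n] = ∑ j ∈ Finset.range (n + 1), Y j :=
    condExp_of_stronglyMeasurable (ℱ.le n) (hadapted n) (hsum_int n)
  filter_upwards [condExp_add (hsum_int n) (hint (n + 1)) (ℱ n), hnext] with ω h1 h2
  simp only [Finset.sum_range_succ _ (n + 1)]
  simp [h1, h2, hcurrent]

theorem ae_not_tendsto_sum_range_sub (hY : ∀ j, Measurable (Y j)) (hindep : iIndepFun Y P)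
    (hmean : ∀ j, P[Y j] = 0) {C : ℝ} (hbdd : ∀ j ω, |Y j ω| ≤ C)
    {d : ℕ → ℝ} (hd : ∀ j, 0 ≤ d j) (hdsum : ¬ Summable d) :
    ∀ᵐ ω ∂P, ¬ ∃ L, Tendsto (fun N => ∑ j ∈ Finset.range N, (Y j ω - d j)) atTop (𝓝 L) := by
  have := hindep.isProbabilityMeasure
  have hint (j : ℕ) : Integrable (Y j) P :=
    .of_bound (hY j).aestronglyMeasurable C (ae_of_all _ (hbdd j))
  have hmart := martingale_sum_range_succ (fun j => (hY j).stronglyMeasurable) hindep hint hmean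
  have hincr : ∀ᵐ ω ∂P, ∀ n, |(∑ j ∈ Finset.range (n + 1 + 1), Y j) ω
      - (∑ j ∈ Finset.range (n + 1), Y j) ω| ≤ C.toNNReal := ae_of_all _ fun ω n => by
    simpa [Finset.sum_range_succ _ (n + 1)] using (hbdd (n + 1) ω).trans (C.le_coe_toNNReal)
  have hdrift : Tendsto (fun N => ∑ j ∈ Finset.range N, d j) atTop atTop :=
    (not_summable_iff_tendsto_nat_atTop_of_nonneg hd).1 hdsum
  filter_upwards [hmart.ae_not_tendsto_atTop_atTop hincr] with ω hω ⟨L, hL⟩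
  have hsum : Tendsto (fun N => ∑ j ∈ Finset.range N, Y j ω) atTop atTop := by
    simpa [Finset.sum_sub_distrib] using hL.add_atTop hdrift
  exact hω (by simpa using (tendsto_add_atTop_iff_nat 1).2 hsum)

end ProbabilityTheory.iIndepFun

lemma abs_indicator_one_sub_le_one {α : Type*} (S : Set α) {p : ℝ} (h0 : 0 ≤ p) (h1 : p ≤ 1)
    (x : α) : |S.indicator 1 x - p| ≤ 1 := by
  classical
  rw [abs_le, Set.indicator_apply, Pi.one_apply]
  split_ifs <;> constructor <;> linarith

namespace ProbabilityTheory

lemma expMeasure_real_Iic {r : ℝ} (hr : 0 < r) {s : ℝ} (hs : 0 ≤ s) :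
    (expMeasure r).real (Set.Iic s) = 1 - Real.exp (-(r * s)) := by
  have := isProbabilityMeasure_expMeasure hr
  rw [← cdf_eq_real, cdf_expMeasure_eq hr, if_pos hs]

lemma integral_indicator_Iic_sub_of_map_eq_expMeasure {Ω : Type*} [MeasurableSpace Ω]
    {P : Measure Ω} [IsProbabilityMeasure P] {ξ : Ω → ℝ} (hξ : AEMeasurable ξ P) {r : ℝ}
    (hr : 0 < r) (hdist : P.map ξ = expMeasure r) {s : ℝ} (hs : 0 ≤ s) :
    ∫ ω, ((Set.Iic s).indicator 1 (ξ ω) - (1 - Real.exp (-(r * s)))) ∂P = 0 := by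
  have := isProbabilityMeasure_expMeasure hr
  rw [← integral_map (f := fun x => (Set.Iic s).indicator 1 x - (1 - Real.exp (-(r * s)))) hξ
    ((measurable_const.indicator measurableSet_Iic).sub measurable_const).aestronglyMeasurable,
    hdist, integral_sub ((integrable_const 1).indicator measurableSet_Iic) (integrable_const _),
    integral_indicator_one measurableSet_Iic, expMeasure_real_Iic hr hs]
  simp

end ProbabilityTheory

/-- if `(c_j)` is a nonincreasing sequence of strictly positive reals with
`Σ_j c_j³ = ∞` and the `ξ_j` are independent exponentials with rates `c_j`, then for every
fixed `s > 0` the probability that the partial sums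
`Σ_{j<N} (c_j · 1{ξ_j ≤ s} − c_j² s)` converge to a finite limit is zero. Together with the
convergent case, `Σ_j c_j³ < ∞` is exactly the condition for `V^c` to be well defined. -/
theorem Vc_partial_sums_diverge_ae {Ω : Type*} [MeasurableSpace Ω]
    (P : Measure Ω) [IsProbabilityMeasure P] (c : ℕ → ℝ) (hc : ∀ j, 0 < c j)
    (hmono : Antitone c) (hsum : ¬ Summable (fun j => c j ^ 3))
    (ξ : ℕ → Ω → ℝ) (hmeas : ∀ j, Measurable (ξ j))
    (hindep : iIndepFun ξ P)
    (hdist : ∀ j, P.map (ξ j) = expMeasure (c j))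
    (s : ℝ) (hs : 0 < s) :
    P {ω | ∃ L : ℝ,
        Tendsto
          (fun N => ∑ j ∈ Finset.range N,
            (c j * (if ξ j ω ≤ s then 1 else 0) - c j ^ 2 * s))
          atTop (𝓝 L)} = 0 := by
  set p : ℕ → ℝ := fun j => 1 - Real.exp (-(c j * s))
  set g : ℕ → ℝ → ℝ := fun j x => c j * ((Set.Iic s).indicator 1 x - p j)
  have hg (j : ℕ) : Measurable (g j) :=
    ((measurable_const.indicator measurableSet_Iic).sub measurable_const).const_mul _
  have hmean (j : ℕ) : P[g j ∘ ξ j] = 0 := by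
    simp only [g, p, Function.comp_apply]
    rw [integral_const_mul, integral_indicator_Iic_sub_of_map_eq_expMeasure
      (hmeas j).aemeasurable (hc j) (hdist j) hs.le, mul_zero]
  have hbdd (j : ℕ) (ω : Ω) : |(g j ∘ ξ j) ω| ≤ c 0 := by
    have hp : |(Set.Iic s).indicator 1 (ξ j ω) - p j| ≤ 1 :=
      abs_indicator_one_sub_le_one _
        (sub_nonneg.2 (Real.exp_le_one_iff.2 (neg_nonpos.2 (mul_pos (hc j) hs).le)))
        (sub_le_self _ (Real.exp_pos _).le) _
    calc |(g j ∘ ξ j) ω| ≤ c j := by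
          simpa [g, abs_mul, abs_of_pos (hc j)] using mul_le_mul_of_nonneg_left hp (hc j).le
      _ ≤ c 0 := hmono (Nat.zero_le j)
  have hdrift_nonneg (j : ℕ) : 0 ≤ c j * (c j * s - p j) :=
    mul_nonneg (hc j).le (by linarith [Real.one_sub_le_exp_neg (c j * s)])
  have hsplit (j : ℕ) (ω : Ω) : c j * (if ξ j ω ≤ s then 1 else 0) - c j ^ 2 * s
      = (g j ∘ ξ j) ω - c j * (c j * s - p j) := by
    simp only [g, Function.comp_apply, Set.indicator_apply, Set.mem_Iic, Pi.one_apply]; ring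
  simp_rw [hsplit]
  simpa only [ae_iff, not_not] using (hindep.comp g hg).ae_not_tendsto_sum_range_sub
    (fun j => (hg j).comp (hmeas j)) hmean hbdd hdrift_nonneg
    (hmono.not_summable_mul_sub_one_sub_exp_neg (fun j => (hc j).le) hsum hs)
end

section
/- Let κ > 0 and let (c_j)_{j ≥ 1} be a nonincreasing sequence of nonnegative reals with C := Σ_j c_j³ < ∞. For n ≥ 1 and l ∈ ℕ, let x^{(n,l)} be the finite vector consisting of the entries c_1 κ^{-2/3} n^{-1/3}, …, c_l κ^{-2/3} n^{-1/3} followed by n entries equal to κ^{-1/3} n^{-2/3}. Then there exists a sequence l(n) → ∞ such that, writing x^{(n)} = x^{(n, l(n))} and σ_r = Σ_i (x_i^{(n)})^r: (i) σ_2 → 0; (ii) σ_3 / σ_2³ → κ + C; and (iii) x_j^{(n)} / σ_2 → c_j for every fixed j ≥ 1, as n → ∞. -/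
open Filter Topology

/-- The `j`-th entry of the configuration `x^{(n,l)}`: the first `l` entries are
`c_j κ^{-2/3} n^{-1/3}` and the following `n` entries are `κ^{-1/3} n^{-2/3}`. -/
noncomputable def mixEntry (κ : ℝ) (c : ℕ → ℝ) (l n j : ℕ) : ℝ :=
  if j < l then c j * κ ^ (-(2 : ℝ) / 3) * (n : ℝ) ^ (-(1 : ℝ) / 3)
  else κ ^ (-(1 : ℝ) / 3) * (n : ℝ) ^ (-(2 : ℝ) / 3)

/-- `σ_r(x^{(n,l)})`, the sum of the `r`-th powers of the `l + n` entries of `x^{(n,l)}`. -/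
noncomputable def mixSigma (κ : ℝ) (c : ℕ → ℝ) (r l n : ℕ) : ℝ :=
  ∑ j ∈ Finset.range (l + n), mixEntry κ c l n j ^ r

/-!
Write `a = κ^{-2/3} n^{-1/3}` for the size of the leading entries and `S_r(l) = Σ_{j<l} c_j^r`.
Since `n (κ^{-1/3} n^{-2/3})² = a` and `n (κ^{-1/3} n^{-2/3})³ = κ a³`, the bulk of `n` small
entries contributes exactly like a single leading entry of size `a` to `σ₂` and like `κ` to `σ₃`:
`σ₂ = a (1 + a S₂(l))` and `σ₃ = a³ (κ + S₃(l))`. A cutoff `l(n) ≈ n^{1/4}` grows slowly enough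
that `a S₂(l) ≤ κ^{-2/3} c₀² n^{-1/12} → 0`, while `S₃(l) → C`; all three limits follow.
-/

open Finset

lemma Real.rpow_neg_two_div_three {x : ℝ} (hx : 0 ≤ x) :
    x ^ (-(2 : ℝ) / 3) = (x ^ (-(1 : ℝ) / 3)) ^ 2 := by
  rw [← Real.rpow_natCast, ← Real.rpow_mul hx]
  norm_num

lemma Real.mul_rpow_neg_one_div_three_pow_three {x : ℝ} (hx : 0 < x) :
    x * (x ^ (-(1 : ℝ) / 3)) ^ 3 = 1 := by
  rw [← Real.rpow_natCast, ← Real.rpow_mul hx.le]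
  norm_num [Real.rpow_neg_one, hx.ne']

lemma sum_range_sq_le_of_antitone {c : ℕ → ℝ} (hmono : Antitone c) (hnonneg : ∀ j, 0 ≤ c j)
    (m : ℕ) : ∑ j ∈ range m, c j ^ 2 ≤ m * c 0 ^ 2 := by
  simpa using sum_le_card_nsmul (range m) (fun j => c j ^ 2) (c 0 ^ 2)
    fun j _ => pow_le_pow_left₀ (hnonneg j) (hmono (Nat.zero_le j)) 2

noncomputable def mixScale (κ : ℝ) (n : ℕ) : ℝ :=
  κ ^ (-(2 : ℝ) / 3) * (n : ℝ) ^ (-(1 : ℝ) / 3)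

lemma mixScale_pos {κ : ℝ} (hκ : 0 < κ) {n : ℕ} (hn : 0 < n) : 0 < mixScale κ n := by
  have : (0 : ℝ) < n := Nat.cast_pos.mpr hn
  unfold mixScale
  positivity

lemma tendsto_mixScale_atTop (κ : ℝ) : Tendsto (mixScale κ) atTop (𝓝 0) := by
  have h := ((tendsto_rpow_neg_atTop (by norm_num : (0 : ℝ) < 1 / 3)).comp
    tendsto_natCast_atTop_atTop).const_mul (κ ^ (-(2 : ℝ) / 3))
  rw [mul_zero] at h
  exact h.congr fun n => by simp [mixScale, neg_div]

section Config

variable {κ : ℝ} (c : ℕ → ℝ) {n : ℕ}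

lemma mixEntry_of_lt {l j : ℕ} (hj : j < l) : mixEntry κ c l n j = c j * mixScale κ n := by
  rw [mixEntry, if_pos hj, mixScale, mul_assoc]

lemma mixSigma_eq_sum_add (r l : ℕ) :
    mixSigma κ c r l n = (∑ j ∈ range l, c j ^ r) * mixScale κ n ^ r
      + n * (κ ^ (-(1 : ℝ) / 3) * (n : ℝ) ^ (-(2 : ℝ) / 3)) ^ r := by
  rw [mixSigma, sum_range_add, sum_mul]
  congr 1
  · exact sum_congr rfl fun j hj => by rw [mixEntry_of_lt c (mem_range.mp hj), mul_pow]
  · simp [mixEntry]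

variable (hκ : 0 < κ) (hn : 0 < n)
include hκ hn

lemma mixSigma_two_eq (l : ℕ) :
    mixSigma κ c 2 l n = mixScale κ n * (1 + mixScale κ n * ∑ j ∈ range l, c j ^ 2) := by
  have hn' : (0 : ℝ) < n := Nat.cast_pos.mpr hn
  rw [mixSigma_eq_sum_add, mixScale, Real.rpow_neg_two_div_three hκ.le,
    Real.rpow_neg_two_div_three hn'.le]
  linear_combination (κ ^ (-(1 : ℝ) / 3)) ^ 2 * (n : ℝ) ^ (-(1 : ℝ) / 3) *
    Real.mul_rpow_neg_one_div_three_pow_three hn'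

lemma mixSigma_three_eq (l : ℕ) :
    mixSigma κ c 3 l n = mixScale κ n ^ 3 * (κ + ∑ j ∈ range l, c j ^ 3) := by
  have hn' : (0 : ℝ) < n := Nat.cast_pos.mpr hn
  rw [mixSigma_eq_sum_add, mixScale, Real.rpow_neg_two_div_three hκ.le,
    Real.rpow_neg_two_div_three hn'.le]
  have hκ3 := Real.mul_rpow_neg_one_div_three_pow_three hκ
  have hn3 := Real.mul_rpow_neg_one_div_three_pow_three hn'
  linear_combination (κ ^ (-(1 : ℝ) / 3)) ^ 3 * ((n : ℝ) ^ (-(1 : ℝ) / 3)) ^ 3 * (hn3 - hκ3)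

end Config

lemma exists_cutoff_tendsto_rpow_mul_sum_sq {c : ℕ → ℝ} (hmono : Antitone c)
    (hnonneg : ∀ j, 0 ≤ c j) :
    ∃ l : ℕ → ℕ, Tendsto l atTop atTop ∧
      Tendsto (fun n : ℕ => (n : ℝ) ^ (-(1 : ℝ) / 3) * ∑ j ∈ range (l n), c j ^ 2)
        atTop (𝓝 0) := by
  refine ⟨fun n => ⌊(n : ℝ) ^ (1 / 4 : ℝ)⌋₊, tendsto_nat_floor_atTop.comp
    ((tendsto_rpow_atTop (by norm_num)).comp tendsto_natCast_atTop_atTop), ?_⟩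
  have hbound : Tendsto (fun n : ℕ => c 0 ^ 2 * (n : ℝ) ^ (-(1 / 12 : ℝ))) atTop (𝓝 0) := by
    simpa using ((tendsto_rpow_neg_atTop (by norm_num)).comp
      tendsto_natCast_atTop_atTop).const_mul (c 0 ^ 2)
  refine squeeze_zero (fun n => by positivity) (fun n => ?_) hbound
  rcases Nat.eq_zero_or_pos n with rfl | hn
  · simp
  have hn' : (0 : ℝ) < n := Nat.cast_pos.mpr hn
  calc (n : ℝ) ^ (-(1 : ℝ) / 3) * ∑ j ∈ range ⌊(n : ℝ) ^ (1 / 4 : ℝ)⌋₊, c j ^ 2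
      ≤ (n : ℝ) ^ (-(1 : ℝ) / 3) * ((n : ℝ) ^ (1 / 4 : ℝ) * c 0 ^ 2) := by
        gcongr
        exact (sum_range_sq_le_of_antitone hmono hnonneg _).trans
          (by gcongr; exact Nat.floor_le (by positivity))
    _ = c 0 ^ 2 * (n : ℝ) ^ (-(1 / 12 : ℝ)) := by
        rw [mul_left_comm, ← mul_assoc, ← Real.rpow_add hn', mul_comm]
        norm_num

/-- for `κ > 0` and a nonincreasing nonnegative cube-summable sequence `c`
with `C = Σ_j c_j³`, there is `l(n) → ∞` such that, with `x^{(n)} = x^{(n, l(n))}`: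
(i) `σ₂ → 0`; (ii) `σ₃ / σ₂³ → κ + C`; (iii) `x_j^{(n)} / σ₂ → c_j` for every fixed `j`. -/
theorem mixConfig_entrance_asymptotics (κ : ℝ) (hκ : 0 < κ) (c : ℕ → ℝ)
    (hmono : Antitone c) (hnonneg : ∀ j, 0 ≤ c j) (hsum : Summable (fun j => c j ^ 3)) :
    ∃ l : ℕ → ℕ, Tendsto l atTop atTop ∧
      Tendsto (fun n : ℕ => mixSigma κ c 2 (l n) n) atTop (𝓝 0) ∧
      Tendsto (fun n : ℕ => mixSigma κ c 3 (l n) n / (mixSigma κ c 2 (l n) n) ^ 3) atTop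
        (𝓝 (κ + ∑' j, c j ^ 3)) ∧
      ∀ j : ℕ,
        Tendsto (fun n : ℕ => mixEntry κ c (l n) n j / mixSigma κ c 2 (l n) n) atTop
          (𝓝 (c j)) := by
  obtain ⟨l, hl, hlS2⟩ := exists_cutoff_tendsto_rpow_mul_sum_sq hmono hnonneg
  have hden : Tendsto (fun n => 1 + mixScale κ n * ∑ j ∈ range (l n), c j ^ 2) atTop (𝓝 1) := by
    simpa [mixScale, mul_assoc] using (hlS2.const_mul (κ ^ (-(2 : ℝ) / 3))).const_add 1
  have hnum := (hsum.hasSum.tendsto_sum_nat.comp hl).const_add κ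
  have hpos : ∀ᶠ n in atTop, 0 < n := eventually_gt_atTop 0
  refine ⟨l, hl, ?_, ?_, fun j => ?_⟩
  · have h := (tendsto_mixScale_atTop κ).mul hden
    rw [zero_mul] at h
    refine h.congr' ?_
    filter_upwards [hpos] with n hn using (mixSigma_two_eq c hκ hn _).symm
  · have h := hnum.div (hden.pow 3) (by norm_num)
    rw [one_pow, div_one] at h
    refine h.congr' ?_
    filter_upwards [hpos] with n hn
    rw [mixSigma_two_eq c hκ hn, mixSigma_three_eq c hκ hn, mul_pow,
      mul_div_mul_left _ _ (pow_ne_zero 3 (mixScale_pos hκ hn).ne')]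
    rfl
  · have h := (tendsto_const_nhds (x := c j)).div hden one_ne_zero
    rw [div_one] at h
    refine h.congr' ?_
    filter_upwards [hpos, hl.eventually_gt_atTop j] with n hn hjl
    rw [Pi.div_apply, mixSigma_two_eq c hκ hn, mixEntry_of_lt c hjl, mul_comm (c j),
      mul_div_mul_left _ _ (mixScale_pos hκ hn).ne']
end
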